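/- The polynomial P^n_0(λ) defined by P^n_k(λ) = Σ_{p=0}^n Σ_{l=n-k}^n (l-n+k)!·[C(l,n-k)²·C(2λ-n+k, l-n+k)/C(n-k+l+1, 2n-2k+1)]·C(n,p)·S(p,l)·λ^{n-p} satisfies P^n_0(λ) = 1 for all n ≥ 1 and λ ∈ ℂ. -/
import Mathlib


/-- Stirling numbers of the second kind. -/
def stirling2 : ℕ → ℕ → ℕ
  | 0, 0 => 1
  | 0, _ + 1 => 0
  | _ + 1, 0 => 0
  | n + 1, l + 1 => (l + 1) * stirling2 n (l + 1) + stirling2 n l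

/-- Generalized binomial coefficient `C(z,k) = z(z-1)⋯(z-k+1)/k!` for `z ∈ ℂ`. -/
noncomputable def gbinom (z : ℂ) (k : ℕ) : ℂ :=
  (∏ i ∈ Finset.range k, (z - i)) / (k.factorial : ℂ)

/-- The polynomials
`P^n_k(λ) = Σ_{p=0}^n Σ_{l=n-k}^n (l-n+k)!·C(l,n-k)²·C(2λ-n+k,l-n+k)/C(n-k+l+1,2n-2k+1)
  ·C(n,p)·S(p,l)·λ^{n-p}`. -/
noncomputable def Pnk (n k : ℕ) (l : ℂ) : ℂ :=
  ∑ p ∈ Finset.range (n + 1), ∑ m ∈ Finset.Icc (n - k) n,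
    ((m - (n - k)).factorial : ℂ) *
      ((m.choose (n - k) : ℂ) ^ 2 * gbinom (2 * l - ((n - k : ℕ) : ℂ)) (m - (n - k)) /
        (((n - k) + m + 1).choose (2 * (n - k) + 1) : ℂ)) *
      (n.choose p : ℂ) * (stirling2 p m : ℂ) * l ^ (n - p)

lemma stirling2_eq_zero : ∀ p n : ℕ, p < n → stirling2 p n = 0 := by
  intro p
  induction p with
  | zero => intro n h; cases n with
    | zero => omega
    | succ m => rfl
  | succ p ih =>
    intro n h
    cases n with
    | zero => omega
    | succ m =>
      rw [stirling2]
      rw [ih (m + 1) (by omega), ih m (by omega)]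
      simp

lemma stirling2_self : ∀ n : ℕ, stirling2 n n = 1 := by
  intro n
  induction n with
  | zero => rfl
  | succ m ih =>
    rw [stirling2, ih, stirling2_eq_zero m (m + 1) (by omega)]
    simp

theorem Pn0_eq_one (n : ℕ) (hn : 1 ≤ n) (l : ℂ) : Pnk n 0 l = 1 := by
  simp only [Pnk, Nat.sub_zero, Finset.Icc_self, Finset.sum_singleton, Nat.sub_self,
    Nat.factorial_zero, Nat.choose_self, Nat.cast_one, one_pow]
  have hg : gbinom (2 * l - (n : ℂ)) 0 = 1 := by
    simp [gbinom]
  have hc : ((n + n + 1).choose (2 * n + 1) : ℂ) = 1 := by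
    have : n + n + 1 = 2 * n + 1 := by ring
    rw [this, Nat.choose_self]; norm_num
  rw [Finset.sum_eq_single n]
  · rw [hg, hc, stirling2_self, Nat.choose_self, Nat.sub_self]
    simp
  · intro p hp hne
    rw [stirling2_eq_zero p n (by simp at hp; omega)]
    simp
  · intro h; simp at h
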